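/- arXiv:2604.12558 — 2 statements merged into one kernel-verified Lean document; each statement's English description precedes it below -/
import Mathlib

section
/- For τ > 0, κ > 2, the functions ψ₁(v,r) = ((v + √(v² + 4τr))/2)^κ and ψ₂(v,r) = ((−v + √(v² + 4τr))/2)^κ are continuously differentiable on ℝ × [0,∞) (in particular, differentiable at points with r = 0). -/
open Real Set Filter Asymptotics Topology ContDiff

noncomputable section PsiAuxSection

private def psiSq (τ : ℝ) (p : ℝ × ℝ) : ℝ := Real.sqrt (p.1 ^ 2 + 4 * τ * p.2)

private def psiG (τ : ℝ) (p : ℝ × ℝ) : ℝ := (p.1 + psiSq τ p) / 2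

private def psiD (τ κ : ℝ) (p : ℝ × ℝ) : (ℝ × ℝ) →L[ℝ] ℝ :=
  if p = 0 then 0 else
    (κ * psiG τ p ^ (κ - 1)) • ((2:ℝ)⁻¹ • (ContinuousLinearMap.fst ℝ ℝ ℝ +
      (1 / (2 * psiSq τ p)) • ((2 * p.1) • ContinuousLinearMap.fst ℝ ℝ ℝ +
        (4 * τ) • ContinuousLinearMap.snd ℝ ℝ ℝ)))

private lemma psi_arg_pos {τ : ℝ} (hτ : 0 < τ) {q : ℝ × ℝ} (h2 : 0 ≤ q.2) (hne : q ≠ 0) :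
    0 < q.1 ^ 2 + 4 * τ * q.2 := by
  rcases h2.lt_or_eq with h | h
  · have : 0 < 4 * τ * q.2 := by positivity
    nlinarith [sq_nonneg q.1]
  · have h1 : q.1 ≠ 0 := by
      intro h1
      exact hne (Prod.ext h1 h.symm)
    have h2' : 0 < q.1 ^ 2 := lt_of_le_of_ne (sq_nonneg _) (Ne.symm (pow_ne_zero 2 h1))
    simpa [← h] using h2'

private lemma psi_abs_le {τ : ℝ} (hτ : 0 < τ) {q : ℝ × ℝ} (h2 : 0 ≤ q.2) :
    |q.1| ≤ psiSq τ q := by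
  rw [psiSq, ← Real.sqrt_sq_eq_abs]
  exact Real.sqrt_le_sqrt (by nlinarith)

private lemma psi_g_nonneg {τ : ℝ} (hτ : 0 < τ) {q : ℝ × ℝ} (h2 : 0 ≤ q.2) :
    0 ≤ psiG τ q := by
  have h := abs_le.1 (psi_abs_le hτ h2)
  rw [psiG]
  linarith [h.1]

private lemma psi_g_le {τ : ℝ} (hτ : 0 < τ) {q : ℝ × ℝ} (h2 : 0 ≤ q.2) :
    psiG τ q ≤ psiSq τ q := by
  have h := abs_le.1 (psi_abs_le hτ h2)
  rw [psiG]
  linarith [h.2]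

private lemma psi_sq_pos {τ : ℝ} {q : ℝ × ℝ} (hpos : 0 < q.1 ^ 2 + 4 * τ * q.2) :
    0 < psiSq τ q := by
  rw [psiSq]
  exact Real.sqrt_pos.2 hpos

private lemma psi_hasFDerivAt {τ κ : ℝ} (hτ : 0 < τ) (hκ : 2 < κ) {q : ℝ × ℝ}
    (hpos : 0 < q.1 ^ 2 + 4 * τ * q.2) :
    HasFDerivAt (fun p : ℝ × ℝ => ((p.1 + Real.sqrt (p.1 ^ 2 + 4 * τ * p.2)) / 2) ^ κ)
      ((κ * psiG τ q ^ (κ - 1)) • ((2:ℝ)⁻¹ • (ContinuousLinearMap.fst ℝ ℝ ℝ +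
        (1 / (2 * psiSq τ q)) • ((2 * q.1) • ContinuousLinearMap.fst ℝ ℝ ℝ +
          (4 * τ) • ContinuousLinearMap.snd ℝ ℝ ℝ)))) q := by
  simp only [psiG, psiSq]
  have h1 : HasFDerivAt (fun p : ℝ × ℝ => p.1 ^ 2 + 4 * τ * p.2)
      ((2 * q.1) • ContinuousLinearMap.fst ℝ ℝ ℝ + (4 * τ) • ContinuousLinearMap.snd ℝ ℝ ℝ) q := by
    have hmul : HasFDerivAt (fun p : ℝ × ℝ => p.1 * p.1 + 4 * τ * p.2)
        ((q.1 • ContinuousLinearMap.fst ℝ ℝ ℝ + q.1 • ContinuousLinearMap.fst ℝ ℝ ℝ) +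
          (4 * τ) • ContinuousLinearMap.snd ℝ ℝ ℝ) q :=
      (hasFDerivAt_fst.mul hasFDerivAt_fst).add (hasFDerivAt_snd.const_mul _)
    have e1 : (fun p : ℝ × ℝ => p.1 ^ 2 + 4 * τ * p.2)
        = fun p : ℝ × ℝ => p.1 * p.1 + 4 * τ * p.2 := by
      funext p; ring
    have e2 : ((2 * q.1) • ContinuousLinearMap.fst ℝ ℝ ℝ : ℝ × ℝ →L[ℝ] ℝ)
        = q.1 • ContinuousLinearMap.fst ℝ ℝ ℝ + q.1 • ContinuousLinearMap.fst ℝ ℝ ℝ := by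
      apply ContinuousLinearMap.ext; intro x
      simp [two_mul, add_mul]
    rw [e1, e2]
    exact hmul
  have hsqrt : HasFDerivAt (fun p : ℝ × ℝ => Real.sqrt (p.1 ^ 2 + 4 * τ * p.2))
      ((1 / (2 * Real.sqrt (q.1 ^ 2 + 4 * τ * q.2))) •
        ((2 * q.1) • ContinuousLinearMap.fst ℝ ℝ ℝ +
          (4 * τ) • ContinuousLinearMap.snd ℝ ℝ ℝ)) q :=
    h1.sqrt hpos.ne'
  have hg : HasFDerivAt (fun p : ℝ × ℝ => (p.1 + Real.sqrt (p.1 ^ 2 + 4 * τ * p.2)) / 2)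
      ((2:ℝ)⁻¹ • (ContinuousLinearMap.fst ℝ ℝ ℝ +
        (1 / (2 * Real.sqrt (q.1 ^ 2 + 4 * τ * q.2))) •
          ((2 * q.1) • ContinuousLinearMap.fst ℝ ℝ ℝ +
            (4 * τ) • ContinuousLinearMap.snd ℝ ℝ ℝ))) q := by
    have hadd := hasFDerivAt_fst.add hsqrt
    have := hadd.const_mul (2:ℝ)⁻¹
    have e : (fun p : ℝ × ℝ => (p.1 + Real.sqrt (p.1 ^ 2 + 4 * τ * p.2)) / 2)
        = fun p : ℝ × ℝ => (2:ℝ)⁻¹ * (p.1 + Real.sqrt (p.1 ^ 2 + 4 * τ * p.2)) := by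
      funext p; ring
    rw [e]
    exact this
  exact (Real.hasDerivAt_rpow_const (Or.inr (by linarith : (1:ℝ) ≤ κ))).comp_hasFDerivAt q hg

private lemma psi_norm_D_le {τ κ : ℝ} (hτ : 0 < τ) (hκ : 2 < κ) {q : ℝ × ℝ} (h2 : 0 ≤ q.2) :
    ‖psiD τ κ q‖ ≤ κ * (psiSq τ q ^ (κ - 1) + τ * psiSq τ q ^ (κ - 2)) := by
  rcases eq_or_ne q 0 with rfl | hne
  · have hk1 : κ - 1 ≠ 0 := by linarith
    have hk2 : κ - 2 ≠ 0 := by linarith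
    simp [psiD, psiSq, Real.zero_rpow hk1, Real.zero_rpow hk2]
  · have hpos := psi_arg_pos hτ h2 hne
    have hs : 0 < psiSq τ q := psi_sq_pos hpos
    have habs : |q.1| ≤ psiSq τ q := psi_abs_le hτ h2
    have hg0 : 0 ≤ psiG τ q := psi_g_nonneg hτ h2
    have hgs : psiG τ q ≤ psiSq τ q := psi_g_le hτ h2
    have hA : (0:ℝ) ≤ psiG τ q ^ (κ - 1) := Real.rpow_nonneg hg0 _
    have hκ0 : (0:ℝ) < κ := by linarith
    rw [psiD, if_neg hne]
    set s := psiSq τ q with hsdef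
    set A := psiG τ q ^ (κ - 1) with hAdef
    have nX : ‖(2 * q.1) • ContinuousLinearMap.fst ℝ ℝ ℝ‖ ≤ |2 * q.1| := by
      rw [norm_smul (2 * q.1) (ContinuousLinearMap.fst ℝ ℝ ℝ), Real.norm_eq_abs]
      exact mul_le_of_le_one_right (abs_nonneg _) (ContinuousLinearMap.norm_fst_le ℝ ℝ ℝ)
    have nY : ‖(4 * τ) • ContinuousLinearMap.snd ℝ ℝ ℝ‖ ≤ |4 * τ| := by
      rw [norm_smul (4 * τ) (ContinuousLinearMap.snd ℝ ℝ ℝ), Real.norm_eq_abs]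
      exact mul_le_of_le_one_right (abs_nonneg _) (ContinuousLinearMap.norm_snd_le ℝ ℝ ℝ)
    have hN : ‖(2 * q.1) • ContinuousLinearMap.fst ℝ ℝ ℝ +
        (4 * τ) • ContinuousLinearMap.snd ℝ ℝ ℝ‖ ≤ 2 * s + 4 * τ := by
      have e1 : |2 * q.1| = 2 * |q.1| := by rw [abs_mul, abs_two]
      have e2 : |4 * τ| = 4 * τ := abs_of_pos (by positivity)
      have := norm_add_le ((2 * q.1) • ContinuousLinearMap.fst ℝ ℝ ℝ)
        ((4 * τ) • ContinuousLinearMap.snd ℝ ℝ ℝ)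
      linarith [nX, nY]
    have hM : ‖ContinuousLinearMap.fst ℝ ℝ ℝ +
        (1 / (2 * s)) • ((2 * q.1) • ContinuousLinearMap.fst ℝ ℝ ℝ +
          (4 * τ) • ContinuousLinearMap.snd ℝ ℝ ℝ)‖ ≤ 1 + (1 / (2 * s)) * (2 * s + 4 * τ) := by
      have nZ : ‖(1 / (2 * s)) • ((2 * q.1) • ContinuousLinearMap.fst ℝ ℝ ℝ +
          (4 * τ) • ContinuousLinearMap.snd ℝ ℝ ℝ)‖ ≤ (1 / (2 * s)) * (2 * s + 4 * τ) := by
        rw [norm_smul (1 / (2 * s)) ((2 * q.1) • ContinuousLinearMap.fst ℝ ℝ ℝ +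
          (4 * τ) • ContinuousLinearMap.snd ℝ ℝ ℝ), Real.norm_eq_abs,
          abs_of_pos (by positivity : (0:ℝ) < 1 / (2 * s))]
        exact mul_le_mul_of_nonneg_left hN (by positivity)
      have := norm_add_le (ContinuousLinearMap.fst ℝ ℝ ℝ)
        ((1 / (2 * s)) • ((2 * q.1) • ContinuousLinearMap.fst ℝ ℝ ℝ +
          (4 * τ) • ContinuousLinearMap.snd ℝ ℝ ℝ))
      linarith [ContinuousLinearMap.norm_fst_le ℝ ℝ ℝ, nZ]
    calc ‖(κ * A) • ((2:ℝ)⁻¹ • (ContinuousLinearMap.fst ℝ ℝ ℝ +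
          (1 / (2 * s)) • ((2 * q.1) • ContinuousLinearMap.fst ℝ ℝ ℝ +
            (4 * τ) • ContinuousLinearMap.snd ℝ ℝ ℝ)))‖
        = (κ * A) * ((2:ℝ)⁻¹ * ‖ContinuousLinearMap.fst ℝ ℝ ℝ +
          (1 / (2 * s)) • ((2 * q.1) • ContinuousLinearMap.fst ℝ ℝ ℝ +
            (4 * τ) • ContinuousLinearMap.snd ℝ ℝ ℝ)‖) := by
          rw [norm_smul (κ * A) ((2:ℝ)⁻¹ • (ContinuousLinearMap.fst ℝ ℝ ℝ +
              (1 / (2 * s)) • ((2 * q.1) • ContinuousLinearMap.fst ℝ ℝ ℝ +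
                (4 * τ) • ContinuousLinearMap.snd ℝ ℝ ℝ))),
            norm_smul ((2:ℝ)⁻¹) (ContinuousLinearMap.fst ℝ ℝ ℝ +
              (1 / (2 * s)) • ((2 * q.1) • ContinuousLinearMap.fst ℝ ℝ ℝ +
                (4 * τ) • ContinuousLinearMap.snd ℝ ℝ ℝ)),
            Real.norm_eq_abs, Real.norm_eq_abs,
            abs_of_nonneg (by positivity : (0:ℝ) ≤ κ * A),
            abs_of_nonneg (by norm_num : (0:ℝ) ≤ (2:ℝ)⁻¹)]
      _ ≤ (κ * A) * ((2:ℝ)⁻¹ * (1 + (1 / (2 * s)) * (2 * s + 4 * τ))) := by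
          gcongr
      _ ≤ κ * (s ^ (κ - 1) + τ * s ^ (κ - 2)) := by
          have hfac : (2:ℝ)⁻¹ * (1 + (1 / (2 * s)) * (2 * s + 4 * τ)) = 1 + τ / s := by
            field_simp
            ring
          rw [hfac]
          have hAB : A ≤ s ^ (κ - 1) := Real.rpow_le_rpow hg0 hgs (by linarith)
          have hBC : s ^ (κ - 1) = s ^ (κ - 2) * s := by
            rw [show κ - 1 = κ - 2 + 1 by ring, Real.rpow_add_one hs.ne']
          have hdiv : A / s ≤ s ^ (κ - 2) := by
            rw [div_le_iff₀ hs]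
            linarith [hAB, hBC]
          have h1 : κ * A ≤ κ * s ^ (κ - 1) :=
            mul_le_mul_of_nonneg_left hAB hκ0.le
          have h2 : κ * τ * (A / s) ≤ κ * τ * s ^ (κ - 2) :=
            mul_le_mul_of_nonneg_left hdiv (by positivity)
          calc (κ * A) * (1 + τ / s) = κ * A + κ * τ * (A / s) := by ring
            _ ≤ κ * s ^ (κ - 1) + κ * τ * s ^ (κ - 2) := add_le_add h1 h2
            _ = κ * (s ^ (κ - 1) + τ * s ^ (κ - 2)) := by ring

private lemma psi_deriv_zero {τ κ : ℝ} (hτ : 0 < τ) (hκ : 2 < κ) :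
    HasFDerivWithinAt (fun p : ℝ × ℝ => ((p.1 + Real.sqrt (p.1 ^ 2 + 4 * τ * p.2)) / 2) ^ κ)
      (0 : ℝ × ℝ →L[ℝ] ℝ) (Set.univ ×ˢ Set.Ici (0:ℝ)) 0 := by
  have hκ0 : κ ≠ 0 := by linarith
  have hf0 : (((0:ℝ × ℝ).1 + Real.sqrt ((0:ℝ × ℝ).1 ^ 2 + 4 * τ * (0:ℝ × ℝ).2)) / 2) ^ κ = 0 := by
    norm_num [Real.zero_rpow hκ0]
  have key : (fun p : ℝ × ℝ => ((p.1 + Real.sqrt (p.1 ^ 2 + 4 * τ * p.2)) / 2) ^ κ)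
      =o[𝓝[Set.univ ×ˢ Set.Ici (0:ℝ)] 0] fun p : ℝ × ℝ => p := by
    refine isLittleO_norm_right.mp ?_
    rw [isLittleO_iff_tendsto ?hgf]
    case hgf =>
      intro x hx
      have hx0 : x = 0 := norm_eq_zero.1 hx
      rw [hx0]
      exact hf0
    have hC : (0:ℝ) ≤ (1 + 4 * τ) ^ (κ / 2) := Real.rpow_nonneg (by linarith) _
    have hev1 : ∀ᶠ (p : ℝ × ℝ) in 𝓝[Set.univ ×ˢ Set.Ici (0:ℝ)] 0, ‖p‖ < 1 := by
      apply Filter.Eventually.filter_mono nhdsWithin_le_nhds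
      exact eventually_of_mem (Metric.ball_mem_nhds (0 : ℝ × ℝ) one_pos)
        (fun p hp => mem_ball_zero_iff.1 hp)
    apply squeeze_zero' (g := fun p : ℝ × ℝ => (1 + 4 * τ) ^ (κ / 2) * ‖p‖ ^ (κ / 2 - 1))
    · filter_upwards [eventually_mem_nhdsWithin] with p hp
      have hg0 : 0 ≤ (p.1 + Real.sqrt (p.1 ^ 2 + 4 * τ * p.2)) / 2 := psi_g_nonneg hτ hp.2
      exact div_nonneg (Real.rpow_nonneg hg0 _) (norm_nonneg _)
    · filter_upwards [eventually_mem_nhdsWithin, hev1] with p hp hp1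
      rcases eq_or_ne p 0 with rfl | hne
      · rw [hf0, zero_div]
        positivity
      · have hp2 : (0:ℝ) ≤ p.2 := hp.2
        have hnp : (0:ℝ) < ‖p‖ := norm_pos_iff.mpr hne
        have harg0 : (0:ℝ) ≤ p.1 ^ 2 + 4 * τ * p.2 := by nlinarith [sq_nonneg p.1]
        have habs1 : |p.1| ≤ ‖p‖ := by
          have := norm_fst_le p
          rwa [Real.norm_eq_abs] at this
        have habs2 : p.2 ≤ ‖p‖ := by
          have := norm_snd_le p
          rw [Real.norm_eq_abs] at this
          exact le_trans (le_abs_self _) this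
        have hargle : p.1 ^ 2 + 4 * τ * p.2 ≤ (1 + 4 * τ) * ‖p‖ := by
          nlinarith [sq_abs p.1, abs_nonneg p.1]
        have hg0 : 0 ≤ (p.1 + Real.sqrt (p.1 ^ 2 + 4 * τ * p.2)) / 2 := psi_g_nonneg hτ hp2
        have hgs : (p.1 + Real.sqrt (p.1 ^ 2 + 4 * τ * p.2)) / 2 ≤ psiSq τ p := psi_g_le hτ hp2
        have hfq : ((p.1 + Real.sqrt (p.1 ^ 2 + 4 * τ * p.2)) / 2) ^ κ
            ≤ (1 + 4 * τ) ^ (κ / 2) * ‖p‖ ^ (κ / 2) := by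
          calc ((p.1 + Real.sqrt (p.1 ^ 2 + 4 * τ * p.2)) / 2) ^ κ
              ≤ psiSq τ p ^ κ := Real.rpow_le_rpow hg0 hgs (by linarith)
            _ = (p.1 ^ 2 + 4 * τ * p.2) ^ (κ / 2) := by
                rw [psiSq, Real.sqrt_eq_rpow, ← Real.rpow_mul harg0,
                  show 1 / 2 * κ = κ / 2 by ring]
            _ ≤ ((1 + 4 * τ) * ‖p‖) ^ (κ / 2) :=
                Real.rpow_le_rpow harg0 hargle (by linarith)
            _ = (1 + 4 * τ) ^ (κ / 2) * ‖p‖ ^ (κ / 2) :=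
                Real.mul_rpow (by linarith) (norm_nonneg _)
        calc ((p.1 + Real.sqrt (p.1 ^ 2 + 4 * τ * p.2)) / 2) ^ κ / ‖p‖
            ≤ ((1 + 4 * τ) ^ (κ / 2) * ‖p‖ ^ (κ / 2)) / ‖p‖ := by gcongr
          _ = (1 + 4 * τ) ^ (κ / 2) * ‖p‖ ^ (κ / 2 - 1) := by
              rw [mul_div_assoc, Real.rpow_sub_one hnp.ne']
    · have hn : Filter.Tendsto (fun p : ℝ × ℝ => ‖p‖)
          (𝓝[Set.univ ×ˢ Set.Ici (0:ℝ)] 0) (𝓝 0) := by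
        have h0 := (continuous_norm.tendsto (0 : ℝ × ℝ)).mono_left
          (nhdsWithin_le_nhds (s := Set.univ ×ˢ Set.Ici (0:ℝ)))
        simpa using h0
      have hr : ContinuousAt (fun x : ℝ => x ^ (κ / 2 - 1)) 0 :=
        Real.continuousAt_rpow_const 0 _ (Or.inr (by linarith))
      have h1 : Filter.Tendsto (fun p : ℝ × ℝ => ‖p‖ ^ (κ / 2 - 1))
          (𝓝[Set.univ ×ˢ Set.Ici (0:ℝ)] 0) (𝓝 ((0:ℝ) ^ (κ / 2 - 1))) :=
        (hr.tendsto).comp hn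
      rw [Real.zero_rpow (by linarith : κ / 2 - 1 ≠ 0)] at h1
      have h2 := h1.const_mul ((1 + 4 * τ) ^ (κ / 2))
      simpa using h2
  have key2 : (fun p : ℝ × ℝ => ((p.1 + Real.sqrt (p.1 ^ 2 + 4 * τ * p.2)) / 2) ^ κ
        - (((0:ℝ × ℝ).1 + Real.sqrt ((0:ℝ × ℝ).1 ^ 2 + 4 * τ * (0:ℝ × ℝ).2)) / 2) ^ κ
        - (0 : ℝ × ℝ →L[ℝ] ℝ) (p - 0))
      =o[𝓝[Set.univ ×ˢ Set.Ici (0:ℝ)] 0] fun p : ℝ × ℝ => p - 0 := by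
    simpa only [hf0, sub_zero, ContinuousLinearMap.zero_apply] using key
  exact HasFDerivWithinAt.of_isLittleO key2

private lemma psi_contOn_D {τ κ : ℝ} (hτ : 0 < τ) (hκ : 2 < κ) :
    ContinuousOn (psiD τ κ) (Set.univ ×ˢ Set.Ici (0:ℝ)) := by
  intro q hq
  rcases eq_or_ne q 0 with rfl | hne
  · -- continuity at the origin, via the norm bound
    have hD0 : psiD τ κ 0 = 0 := if_pos rfl
    have hT : Filter.Tendsto (psiD τ κ) (𝓝[Set.univ ×ˢ Set.Ici (0:ℝ)] 0)
        (𝓝 (0 : ℝ × ℝ →L[ℝ] ℝ)) := by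
      rw [tendsto_zero_iff_norm_tendsto_zero]
      apply squeeze_zero' (g := fun p : ℝ × ℝ =>
        κ * (psiSq τ p ^ (κ - 1) + τ * psiSq τ p ^ (κ - 2)))
      · filter_upwards with p using norm_nonneg _
      · filter_upwards [eventually_mem_nhdsWithin] with p hp
        exact psi_norm_D_le hτ hκ hp.2
      · have hsc : Continuous (psiSq τ) := by
          unfold psiSq
          fun_prop
        have hs0 : psiSq τ (0 : ℝ × ℝ) = 0 := by simp [psiSq]
        have hsT : Filter.Tendsto (psiSq τ) (𝓝[Set.univ ×ˢ Set.Ici (0:ℝ)] 0) (𝓝 0) := by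
          have h0 := (hsc.tendsto (0 : ℝ × ℝ)).mono_left
            (nhdsWithin_le_nhds (s := Set.univ ×ˢ Set.Ici (0:ℝ)))
          rwa [hs0] at h0
        have hr1 : ContinuousAt (fun x : ℝ => x ^ (κ - 1)) 0 :=
          Real.continuousAt_rpow_const 0 _ (Or.inr (by linarith))
        have hr2 : ContinuousAt (fun x : ℝ => x ^ (κ - 2)) 0 :=
          Real.continuousAt_rpow_const 0 _ (Or.inr (by linarith))
        have h1 : Filter.Tendsto (fun p : ℝ × ℝ => psiSq τ p ^ (κ - 1))
            (𝓝[Set.univ ×ˢ Set.Ici (0:ℝ)] 0) (𝓝 ((0:ℝ) ^ (κ - 1))) := hr1.tendsto.comp hsT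
        have h2 : Filter.Tendsto (fun p : ℝ × ℝ => psiSq τ p ^ (κ - 2))
            (𝓝[Set.univ ×ˢ Set.Ici (0:ℝ)] 0) (𝓝 ((0:ℝ) ^ (κ - 2))) := hr2.tendsto.comp hsT
        rw [Real.zero_rpow (by linarith : κ - 1 ≠ 0)] at h1
        rw [Real.zero_rpow (by linarith : κ - 2 ≠ 0)] at h2
        have h3 := ((h1.add (h2.const_mul τ)).const_mul κ)
        simpa using h3
    have hgoal : ContinuousWithinAt (psiD τ κ) (Set.univ ×ˢ Set.Ici (0:ℝ)) 0 := by
      rw [ContinuousWithinAt, hD0]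
      exact hT
    exact hgoal
  · -- away from the origin : continuity of the explicit formula
    apply ContinuousAt.continuousWithinAt
    have hpos := psi_arg_pos hτ hq.2 hne
    have hs : psiSq τ q ≠ 0 := (psi_sq_pos hpos).ne'
    have hev : ∀ᶠ p in 𝓝 q, psiD τ κ p =
        (κ * psiG τ p ^ (κ - 1)) • ((2:ℝ)⁻¹ • (ContinuousLinearMap.fst ℝ ℝ ℝ +
          (1 / (2 * psiSq τ p)) • ((2 * p.1) • ContinuousLinearMap.fst ℝ ℝ ℝ +
            (4 * τ) • ContinuousLinearMap.snd ℝ ℝ ℝ))) := by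
      filter_upwards [isOpen_compl_singleton.mem_nhds hne] with p hp
      exact if_neg hp
    rw [continuousAt_congr hev]
    have hGc : Continuous (psiG τ) := by
      unfold psiG psiSq
      fun_prop
    have hSc : Continuous (psiSq τ) := by
      unfold psiSq
      fun_prop
    have hscalar : ContinuousAt (fun p : ℝ × ℝ => κ * psiG τ p ^ (κ - 1)) q :=
      continuousAt_const.mul
        ((Real.continuousAt_rpow_const (psiG τ q) (κ - 1)
          (Or.inr (by linarith))).comp hGc.continuousAt)
    have hc1 : ContinuousAt (fun p : ℝ × ℝ => 1 / (2 * psiSq τ p)) q :=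
      ContinuousAt.div continuousAt_const ((continuous_const.mul hSc).continuousAt)
        (by simpa using hs)
    have hNc : ContinuousAt (fun p : ℝ × ℝ =>
        (2 * p.1) • ContinuousLinearMap.fst ℝ ℝ ℝ +
          (4 * τ) • ContinuousLinearMap.snd ℝ ℝ ℝ) q :=
      (((continuous_const.mul continuous_fst).continuousAt).smul continuousAt_const).add
        continuousAt_const
    have hinner : ContinuousAt (fun p : ℝ × ℝ =>
        ContinuousLinearMap.fst ℝ ℝ ℝ +
          (1 / (2 * psiSq τ p)) • ((2 * p.1) • ContinuousLinearMap.fst ℝ ℝ ℝ +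
            (4 * τ) • ContinuousLinearMap.snd ℝ ℝ ℝ)) q :=
      continuousAt_const.add (hc1.smul hNc)
    exact hscalar.smul (hinner.const_smul ((2:ℝ)⁻¹))

private lemma psi_key (τ κ : ℝ) (hτ : 0 < τ) (hκ : 2 < κ) :
    ContDiffOn ℝ 1 (fun p : ℝ × ℝ => ((p.1 + Real.sqrt (p.1 ^ 2 + 4 * τ * p.2)) / 2) ^ κ)
      (Set.univ ×ˢ Set.Ici (0 : ℝ)) := by
  intro x hx
  rw [show (1 : WithTop ℕ∞) = 0 + 1 from (zero_add 1).symm,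
    contDiffWithinAt_succ_iff_hasFDerivWithinAt (by simp)]
  refine ⟨Set.univ ×ˢ Set.Ici (0:ℝ), ?_, ?_, psiD τ κ, ?_, ?_⟩
  · rw [Set.insert_eq_of_mem hx]
    exact self_mem_nhdsWithin
  · intro h
    simp at h
  · intro y hy
    rcases eq_or_ne y 0 with rfl | hne
    · have e : psiD τ κ 0 = 0 := if_pos rfl
      rw [e]
      exact psi_deriv_zero hτ hκ
    · have hpos := psi_arg_pos hτ hy.2 hne
      simp only [psiD, if_neg hne]
      exact (psi_hasFDerivAt hτ hκ hpos).hasFDerivWithinAt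
  · exact (contDiffOn_zero.mpr (psi_contOn_D hτ hκ)).contDiffWithinAt hx

end PsiAuxSection

theorem psi_contDiffOn (τ κ : ℝ) (hτ : 0 < τ) (hκ : 2 < κ) :
    ContDiffOn ℝ 1
      (fun p : ℝ × ℝ => ((p.1 + Real.sqrt (p.1 ^ 2 + 4 * τ * p.2)) / 2) ^ κ)
      (Set.univ ×ˢ Set.Ici (0 : ℝ)) ∧
    ContDiffOn ℝ 1
      (fun p : ℝ × ℝ => ((-p.1 + Real.sqrt (p.1 ^ 2 + 4 * τ * p.2)) / 2) ^ κ)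
      (Set.univ ×ˢ Set.Ici (0 : ℝ)) := by
  constructor
  · exact psi_key τ κ hτ hκ
  · have hN : ContDiffOn ℝ 1 (fun p : ℝ × ℝ => (-p.1, p.2))
        (Set.univ ×ˢ Set.Ici (0 : ℝ)) :=
      (ContDiff.prodMk (ContDiff.neg contDiff_fst) contDiff_snd).contDiffOn
    have hmap : Set.MapsTo (fun p : ℝ × ℝ => (-p.1, p.2))
        (Set.univ ×ˢ Set.Ici (0 : ℝ)) (Set.univ ×ˢ Set.Ici (0 : ℝ)) :=
      fun p hp => ⟨trivial, hp.2⟩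
    have h := (psi_key τ κ hτ hκ).comp hN hmap
    exact h.congr fun p hp => by simp [Function.comp, neg_sq]
end

section
/- Let B₁ ∈ ℝ^{m×k}, B₂ ∈ ℝ^{m×ℓ}, and let P ∈ ℝ^{k×k} be symmetric positive definite. Suppose the block matrix (B₁ B₂) ∈ ℝ^{m×(k+ℓ)} has full row rank m and B₂ has full column rank ℓ (so in particular ℓ ≤ m). Then the block matrix M = [[0, −B₂ᵀ],[B₂, B₁ P B₁ᵀ]] ∈ ℝ^{(ℓ+m)×(ℓ+m)} is nonsingular. -/
open Matrix

lemma rank_eq_card_cols_inj {m n : Type*} [Fintype m] [Fintype n] [DecidableEq n]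
    (A : Matrix m n ℝ) (h : A.rank = Fintype.card n) :
    Function.Injective A.mulVec := by
  have : Function.Injective A.mulVecLin := by
    rw [← LinearMap.ker_eq_bot]
    have hrn := A.mulVecLin.finrank_range_add_finrank_ker
    rw [Matrix.rank] at h
    rw [h] at hrn
    have hdom : Module.finrank ℝ (n → ℝ) = Fintype.card n := Module.finrank_fintype_fun_eq_card ℝ
    rw [hdom] at hrn
    have : Module.finrank ℝ (LinearMap.ker A.mulVecLin) = 0 := by omega
    exact Submodule.finrank_eq_zero.mp this
  exact this

open Matrix in
theorem kkt_block_nonsingular (m k l : ℕ)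
    (B₁ : Matrix (Fin m) (Fin k) ℝ) (B₂ : Matrix (Fin m) (Fin l) ℝ)
    (P : Matrix (Fin k) (Fin k) ℝ) (hP : P.PosDef)
    (hrow : (Matrix.fromCols B₁ B₂).rank = m)
    (hcol : B₂.rank = l) :
    IsUnit (Matrix.fromBlocks (0 : Matrix (Fin l) (Fin l) ℝ) (-B₂ᵀ) B₂ (B₁ * P * B₁ᵀ)) := by
  rw [← Matrix.mulVec_injective_iff_isUnit]
  -- injectivity of transpose of fromColumns
  have hT : Function.Injective ((Matrix.fromCols B₁ B₂)ᵀ).mulVec := by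
    apply rank_eq_card_cols_inj
    rw [Matrix.rank_transpose, hrow]
    simp
  have hB₂ : Function.Injective B₂.mulVec := by
    apply rank_eq_card_cols_inj
    rw [hcol]; simp
  rw [← Matrix.coe_mulVecLin, injective_iff_map_eq_zero' ((Matrix.fromBlocks _ _ _ _).mulVecLin)]
  intro x
  constructor
  swap
  · rintro rfl; simp [Matrix.mulVec_zero]
  intro hx
  set u : Fin l → ℝ := x ∘ Sum.inl with hu
  set v : Fin m → ℝ := x ∘ Sum.inr with hv
  have hxe : x = Sum.elim u v := by
    funext i; cases i <;> rfl
  rw [Matrix.mulVecLin_apply, hxe, Matrix.fromBlocks_mulVec] at hx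
  have h1' : B₂ᵀ *ᵥ v = 0 := by
    funext i
    have := congrFun hx (Sum.inl i)
    simpa [Matrix.neg_mulVec, Pi.neg_apply, neg_eq_zero] using this
  have h2 : B₂ *ᵥ u + (B₁ * P * B₁ᵀ) *ᵥ v = 0 := by
    funext i
    have := congrFun hx (Sum.inr i)
    simpa using this
  -- dot with v
  have hdot : v ⬝ᵥ (B₂ *ᵥ u) + v ⬝ᵥ ((B₁ * P * B₁ᵀ) *ᵥ v) = 0 := by
    rw [← dotProduct_add, h2, dotProduct_zero]
  have hterm1 : v ⬝ᵥ (B₂ *ᵥ u) = 0 := by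
    rw [Matrix.dotProduct_mulVec, ← Matrix.mulVec_transpose, h1', zero_dotProduct]
  have hterm2 : v ⬝ᵥ ((B₁ * P * B₁ᵀ) *ᵥ v) = (B₁ᵀ *ᵥ v) ⬝ᵥ (P *ᵥ (B₁ᵀ *ᵥ v)) := by
    rw [← Matrix.mulVec_mulVec, ← Matrix.mulVec_mulVec, Matrix.dotProduct_mulVec,
      ← Matrix.mulVec_transpose]
  have hB₁v : B₁ᵀ *ᵥ v = 0 := by
    by_contra hne
    have := hP.dotProduct_mulVec_pos hne
    rw [hterm1, hterm2] at hdot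
    have : (0:ℝ) < (B₁ᵀ *ᵥ v) ⬝ᵥ (P *ᵥ (B₁ᵀ *ᵥ v)) := by
      simpa using this
    linarith
  have hv0 : v = 0 := by
    apply hT
    rw [Matrix.transpose_fromCols, Matrix.fromRows_mulVec, Matrix.mulVec_zero]
    funext i
    cases i with
    | inl i => simp [hB₁v]
    | inr i => simp [Matrix.mulVec, h1']
  have hu0 : u = 0 := by
    apply hB₂
    rw [Matrix.mulVec_zero]
    rw [hv0] at h2
    simpa using h2
  rw [hxe, hu0, hv0]
  simp
end
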